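/- If a function f : ℝ^n → ℝ^n satisfies the incremental sector bound condition [y₁ - y₂; f(y₁) - f(y₂)]ᵀ M [y₁ - y₂; f(y₁) - f(y₂)] ≥ 0 for all y₁, y₂ ∈ ℝ^n, where M is the block matrix [[-(U₁U₂ + (U₁U₂)ᵀ), U₁ + U₂], [(U₁ + U₂)ᵀ, -I]] with given matrices U₂ ≻ U₁ ⪰ 0, then f is globally Lipschitz continuous. -/

import Mathlib

/-!
Write `u = y₁ - y₂` and `v = f y₁ - f y₂`. The sector condition bounds `‖v‖²` by
`-uᵀ He(U₁U₂) u + 2 uᵀ(U₁ + U₂) v ≤ ‖A‖ ‖u‖² + 2 ‖B‖ ‖u‖ ‖v‖`, and absorbing the cross term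
(`2βab ≤ a²/2 + 2β²b²`) leaves `‖v‖² ≤ (2‖A‖ + 4‖B‖²) ‖u‖²`, with `A`, `B` the two matrices
viewed as operators on Euclidean space.
-/

open Matrix Real

open scoped RealInnerProductSpace

theorem le_sqrt_mul_of_sq_le_mul_add_mul {a b α β : ℝ} (ha : 0 ≤ a) (hb : 0 ≤ b)
    (h : a ^ 2 ≤ α * b ^ 2 + 2 * β * a * b) : a ≤ √(2 * α + 4 * β ^ 2) * b := calc
  a = √(a ^ 2) := (sqrt_sq ha).symm
  _ ≤ √((2 * α + 4 * β ^ 2) * b ^ 2) := sqrt_le_sqrt (by nlinarith [sq_nonneg (a - 2 * β * b)])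
  _ = √(2 * α + 4 * β ^ 2) * b := by rw [sqrt_mul' _ (sq_nonneg b), sqrt_sq hb]

theorem norm_le_of_sq_norm_le_sector {E : Type*} [NormedAddCommGroup E] [InnerProductSpace ℝ E]
    (A B : E →L[ℝ] E) {u v : E}
    (h : ‖v‖ ^ 2 ≤ -⟪u, A u⟫ + 2 * ⟪u, B v⟫) :
    ‖v‖ ≤ √(2 * ‖A‖ + 4 * ‖B‖ ^ 2) * ‖u‖ := by
  have hA : -⟪u, A u⟫ ≤ ‖A‖ * ‖u‖ ^ 2 := calc
    -⟪u, A u⟫ ≤ ‖u‖ * ‖A u‖ := (neg_le_abs _).trans (abs_real_inner_le_norm u (A u))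
    _ ≤ ‖u‖ * (‖A‖ * ‖u‖) := by gcongr; exact A.le_opNorm u
    _ = ‖A‖ * ‖u‖ ^ 2 := by ring
  have hB : ⟪u, B v⟫ ≤ ‖B‖ * ‖v‖ * ‖u‖ := calc
    ⟪u, B v⟫ ≤ ‖u‖ * ‖B v‖ := real_inner_le_norm u (B v)
    _ ≤ ‖u‖ * (‖B‖ * ‖v‖) := by gcongr; exact B.le_opNorm v
    _ = ‖B‖ * ‖v‖ * ‖u‖ := by ring
  exact le_sqrt_mul_of_sq_le_mul_add_mul (norm_nonneg v) (norm_nonneg u) (by linarith)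

theorem EuclideanSpace.norm_toLp_eq_sqrt_sum_sq {ι : Type*} [Fintype ι] (x : ι → ℝ) :
    ‖WithLp.toLp 2 x‖ = √(∑ i, x i ^ 2) := by
  simp [EuclideanSpace.norm_eq]

theorem stmt0_general {n : ℕ} (U₁ U₂ : Matrix (Fin n) (Fin n) ℝ)
    (f : (Fin n → ℝ) → Fin n → ℝ)
    (hsec : ∀ y₁ y₂ : Fin n → ℝ,
      0 ≤ -((f y₁ - f y₂) ⬝ᵥ (f y₁ - f y₂))
          - (y₁ - y₂) ⬝ᵥ ((U₁ * U₂ + (U₁ * U₂)ᵀ).mulVec (y₁ - y₂))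
          + 2 * ((y₁ - y₂) ⬝ᵥ ((U₁ + U₂).mulVec (f y₁ - f y₂)))) :
    ∃ L : ℝ, 0 ≤ L ∧ ∀ y₁ y₂ : Fin n → ℝ,
      Real.sqrt (∑ i, (f y₁ i - f y₂ i)^2) ≤ L * Real.sqrt (∑ i, (y₁ i - y₂ i)^2) := by
  set A := toEuclideanCLM (𝕜 := ℝ) (U₁ * U₂ + (U₁ * U₂)ᵀ)
  set B := toEuclideanCLM (𝕜 := ℝ) (U₁ + U₂)
  refine ⟨√(2 * ‖A‖ + 4 * ‖B‖ ^ 2), sqrt_nonneg _, fun y₁ y₂ => ?_⟩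
  set u : EuclideanSpace ℝ (Fin n) := WithLp.toLp 2 (y₁ - y₂)
  set v : EuclideanSpace ℝ (Fin n) := WithLp.toLp 2 (f y₁ - f y₂)
  have h : ‖v‖ ^ 2 ≤ -⟪u, A u⟫ + 2 * ⟪u, B v⟫ := by
    rw [← real_inner_self_eq_norm_sq, inner_toEuclideanCLM, inner_toEuclideanCLM,
      EuclideanSpace.inner_toLp_toLp, star_trivial]
    linarith [hsec y₁ y₂]
  simpa only [u, v, EuclideanSpace.norm_toLp_eq_sqrt_sum_sq, Pi.sub_apply] using
    norm_le_of_sq_norm_le_sector A B h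

/-- If `f : ℝⁿ → ℝⁿ` satisfies the incremental sector bound condition with
matrices `U₂ ≻ U₁ ⪰ 0`, then `f` is globally Lipschitz continuous
(Euclidean norms). -/
theorem stmt0 {n : ℕ} (U₁ U₂ : Matrix (Fin n) (Fin n) ℝ)
    (hU₁ : U₁.PosSemidef) (hU₂ : (U₂ - U₁).PosDef)
    (f : (Fin n → ℝ) → Fin n → ℝ)
    (hsec : ∀ y₁ y₂ : Fin n → ℝ,
      0 ≤ -((f y₁ - f y₂) ⬝ᵥ (f y₁ - f y₂))
          - (y₁ - y₂) ⬝ᵥ ((U₁ * U₂ + (U₁ * U₂)ᵀ).mulVec (y₁ - y₂))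
          + 2 * ((y₁ - y₂) ⬝ᵥ ((U₁ + U₂).mulVec (f y₁ - f y₂)))) :
    ∃ L : ℝ, 0 ≤ L ∧ ∀ y₁ y₂ : Fin n → ℝ,
      Real.sqrt (∑ i, (f y₁ i - f y₂ i)^2) ≤ L * Real.sqrt (∑ i, (y₁ i - y₂ i)^2) :=
  stmt0_general U₁ U₂ f hsec
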